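/- arXiv:2211.02957 — 9 statements merged into one kernel-verified Lean document; each statement's English description precedes it below -/
import Mathlib

section
/- Let R be a ring and let Σ = {s_ijk : i,j,k ∈ {1,…,n}} be a set of central elements of R satisfying s_iik = 1 = s_ikk and s_ijk · s_ikℓ = s_ijℓ · s_jkℓ for all i,j,k,ℓ. Then the set K of n×n matrices over R with the usual addition and with multiplication (AB)_ij = Σ_k s_ikj · a_ik · b_kj is an associative ring with identity (the identity matrix). -/
namespace Matrix

variable {ι R : Type*} [Fintype ι]

/-- The product of the multiplier-system matrix ring `M(n, R, Σ)`. -/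
def twistedMul [NonUnitalNonAssocSemiring R] (s : ι → ι → ι → R) (A B : Matrix ι ι R) :
    Matrix ι ι R :=
  of fun i j => ∑ k, s i k j * A i k * B k j

@[simp]
theorem twistedMul_apply [NonUnitalNonAssocSemiring R] (s : ι → ι → ι → R)
    (A B : Matrix ι ι R) (i j : ι) :
    twistedMul s A B i j = ∑ k, s i k j * A i k * B k j :=
  rfl

theorem twistedMul_add [NonUnitalNonAssocSemiring R] (s : ι → ι → ι → R)
    (A B C : Matrix ι ι R) :
    twistedMul s A (B + C) = twistedMul s A B + twistedMul s A C := by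
  ext i j
  simp only [twistedMul_apply, add_apply, mul_add, Finset.sum_add_distrib]

theorem add_twistedMul [NonUnitalNonAssocSemiring R] (s : ι → ι → ι → R)
    (A B C : Matrix ι ι R) :
    twistedMul s (A + B) C = twistedMul s A C + twistedMul s B C := by
  ext i j
  simp only [twistedMul_apply, add_apply, mul_add, add_mul, Finset.sum_add_distrib]

theorem twistedMul_assoc [NonUnitalSemiring R] (s : ι → ι → ι → R)
    (hs : ∀ i j k r, Commute (s i j k) r)
    (hcocycle : ∀ i j k l, s i j k * s i k l = s i j l * s j k l) (A B C : Matrix ι ι R) :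
    twistedMul s (twistedMul s A B) C = twistedMul s A (twistedMul s B C) := by
  ext i j
  simp only [twistedMul_apply, Finset.mul_sum, Finset.sum_mul]
  rw [Finset.sum_comm]
  refine Finset.sum_congr rfl fun k _ => Finset.sum_congr rfl fun x _ => ?_
  calc s i x j * (s i k x * A i k * B k x) * C x j
      = s i k x * s i x j * A i k * B k x * C x j := by
        rw [(hs i k x (s i x j)).eq]; simp only [mul_assoc]
    _ = s i k j * (s k x j * A i k) * B k x * C x j := by
        rw [hcocycle, mul_assoc (s i k j)]
    _ = s i k j * A i k * (s k x j * B k x * C x j) := by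
        rw [(hs k x j (A i k)).eq]; simp only [mul_assoc]

variable [DecidableEq ι] [Semiring R]

theorem one_twistedMul (s : ι → ι → ι → R) (hs : ∀ i k, s i i k = 1) (A : Matrix ι ι R) :
    twistedMul s 1 A = A := by
  ext i j
  rw [twistedMul_apply, Finset.sum_eq_single i (fun k _ hk => by simp [one_apply_ne' hk])
    (fun h => absurd (Finset.mem_univ i) h)]
  simp [hs]

theorem twistedMul_one (s : ι → ι → ι → R) (hs : ∀ i k, s i k k = 1) (A : Matrix ι ι R) :
    twistedMul s A 1 = A := by
  ext i j
  rw [twistedMul_apply, Finset.sum_eq_single j (fun k _ hk => by simp [one_apply_ne hk])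
    (fun h => absurd (Finset.mem_univ j) h)]
  simp [hs]

end Matrix

open Matrix in
theorem formal_matrix_ring_structure_general {R : Type*} [Ring R] (n : ℕ)
    (s : Fin n → Fin n → Fin n → R)
    (hcent : ∀ i j k (r : R), s i j k * r = r * s i j k)
    (h1 : ∀ i k, s i i k = 1) (h2 : ∀ i k, s i k k = 1)
    (hmul : ∀ i j k l, s i j k * s i k l = s i j l * s j k l)
    (fmul : Matrix (Fin n) (Fin n) R → Matrix (Fin n) (Fin n) R → Matrix (Fin n) (Fin n) R)
    (hfmul : ∀ A B i j, fmul A B i j = ∑ k, s i k j * A i k * B k j) :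
    (∀ A B C, fmul (fmul A B) C = fmul A (fmul B C)) ∧
    (∀ A, fmul 1 A = A) ∧ (∀ A, fmul A 1 = A) ∧
    (∀ A B C, fmul A (B + C) = fmul A B + fmul A C) ∧
    (∀ A B C, fmul (A + B) C = fmul A C + fmul B C) := by
  obtain rfl : fmul = twistedMul s := funext₂ fun A B => ext (hfmul A B)
  exact ⟨twistedMul_assoc s hcent hmul, one_twistedMul s h1, twistedMul_one s h2,
    twistedMul_add s, add_twistedMul s⟩

/-- For a multiplier system `s` over a ring `R`, the set of `n × n`
matrices over `R` with usual addition and multiplication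
`(A*B) i j = ∑ k, s i k j * A i k * B k j` is an associative ring whose identity
is the identity matrix. -/
theorem formal_matrix_ring_structure {R : Type*} [Ring R] (n : ℕ) (hn : 2 ≤ n)
    (s : Fin n → Fin n → Fin n → R)
    (hcent : ∀ i j k (r : R), s i j k * r = r * s i j k)
    (h1 : ∀ i k, s i i k = 1) (h2 : ∀ i k, s i k k = 1)
    (hmul : ∀ i j k l, s i j k * s i k l = s i j l * s j k l)
    (fmul : Matrix (Fin n) (Fin n) R → Matrix (Fin n) (Fin n) R → Matrix (Fin n) (Fin n) R)
    (hfmul : ∀ A B i j, fmul A B i j = ∑ k, s i k j * A i k * B k j) :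
    (∀ A B C, fmul (fmul A B) C = fmul A (fmul B C)) ∧
    (∀ A, fmul 1 A = A) ∧ (∀ A, fmul A 1 = A) ∧
    (∀ A B C, fmul A (B + C) = fmul A B + fmul A C) ∧
    (∀ A B C, fmul (A + B) C = fmul A C + fmul B C) :=
  formal_matrix_ring_structure_general n s hcent h1 h2 hmul fmul hfmul
end

section
/- Let Σ = {s_ijk} be a multiplier system over a ring R in which every s_ijk is 0 or 1. Then for any pairwise distinct indices i, j, k, exactly one of the following holds for the three elements s_iji, s_jkj, s_kik: (1) all three are equal to 1; (2) exactly two of them are 0 and the third is 1; (3) all three are 0. Equivalently, it is impossible that exactly one of s_iji, s_jkj, s_kik is 0, and impossible that exactly two are 1. -/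
/-!
Specialising the cocycle identity `s i j k * s i k l = s i j l * s j k l` gives
`s i j i = s j i j`, `s j k j = s j k i * s k j i`, `s k i j = s j k i * s j i j` (when
`s j k j = 1`) and `s k i j * s k j k = s k i k * s i j k`. In a (01)-system a product equal
to `1` has both factors equal to `1`, so `s i j i = s j k j = 1` propagates along these
identities to `s k i k = 1`. Applied to the three rotations of `(i, j, k)`, this excludes
exactly the triples with precisely one zero.
-/

section MultiplierSystem

variable {M ι : Type*} {s : ι → ι → ι → M}

theorem multiplier_symm [MulOneClass M] (h1 : ∀ i k, s i i k = 1) (h2 : ∀ i k, s i k k = 1)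
    (hmul : ∀ i j k l, s i j k * s i k l = s i j l * s j k l) (i j : ι) :
    s i j i = s j i j := by
  simpa only [h1, h2, mul_one, one_mul] using hmul i j i j

theorem multiplier_eq_mul [MulOneClass M] (h1 : ∀ i k, s i i k = 1)
    (hmul : ∀ i j k l, s i j k * s i k l = s i j l * s j k l) (i j k : ι) :
    s j k j = s j k i * s k j i := by
  simpa only [h1, mul_one] using hmul j k j i

theorem multiplier_eq_one_of_eq_one_of_eq_one [MulZeroOneClass M] [Nontrivial M]
    (h1 : ∀ i k, s i i k = 1) (h2 : ∀ i k, s i k k = 1)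
    (hmul : ∀ i j k l, s i j k * s i k l = s i j l * s j k l)
    (h01 : ∀ i j k, s i j k = 0 ∨ s i j k = 1) {i j k : ι}
    (hij : s i j i = 1) (hjk : s j k j = 1) : s k i k = 1 := by
  have hjki : s j k i = 1 :=
    (h01 j k i).resolve_left
      (left_ne_zero_of_mul_eq_one (hjk ▸ multiplier_eq_mul h1 hmul i j k).symm)
  have hkij : s k i j = 1 := by
    have h := hmul j k i j
    rwa [hjki, hjk, ← multiplier_symm h1 h2 hmul, hij, one_mul, one_mul, eq_comm] at h
  have hkik : s k i k * s i j k = 1 := by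
    rw [← hmul k i j k, hkij, ← multiplier_symm h1 h2 hmul, hjk, one_mul]
  exact (h01 k i k).resolve_left (left_ne_zero_of_mul_eq_one hkik)

end MultiplierSystem

theorem zero_one_multiplier_triple_general {R : Type*} [Ring R] [Nontrivial R] (n : ℕ)
    (s : Fin n → Fin n → Fin n → R)
    (h1 : ∀ i k, s i i k = 1) (h2 : ∀ i k, s i k k = 1)
    (hmul : ∀ i j k l, s i j k * s i k l = s i j l * s j k l)
    (h01 : ∀ i j k, s i j k = 0 ∨ s i j k = 1)
    (i j k : Fin n) :
    (s i j i = 1 ∧ s j k j = 1 ∧ s k i k = 1) ∨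
    (s i j i = 1 ∧ s j k j = 0 ∧ s k i k = 0) ∨
    (s i j i = 0 ∧ s j k j = 1 ∧ s k i k = 0) ∨
    (s i j i = 0 ∧ s j k j = 0 ∧ s k i k = 1) ∨
    (s i j i = 0 ∧ s j k j = 0 ∧ s k i k = 0) := by
  have hk := multiplier_eq_one_of_eq_one_of_eq_one (i := i) (j := j) (k := k) h1 h2 hmul h01
  have hi := multiplier_eq_one_of_eq_one_of_eq_one (i := j) (j := k) (k := i) h1 h2 hmul h01
  have hj := multiplier_eq_one_of_eq_one_of_eq_one (i := k) (j := i) (k := j) h1 h2 hmul h01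
  rcases h01 i j i with ha | ha <;> rcases h01 j k j with hb | hb <;>
    rcases h01 k i k with hc | hc <;> simp_all

/-- Lemma 2.1: In a (01)-multiplier system, for pairwise distinct
`i, j, k`, the triple `(s i j i, s j k j, s k i k)` is either all ones, or has
exactly one entry `1` and two entries `0`, or is all zeros. -/
theorem zero_one_multiplier_triple {R : Type*} [Ring R] [Nontrivial R] (n : ℕ)
    (s : Fin n → Fin n → Fin n → R)
    (hcent : ∀ i j k (r : R), s i j k * r = r * s i j k)
    (h1 : ∀ i k, s i i k = 1) (h2 : ∀ i k, s i k k = 1)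
    (hmul : ∀ i j k l, s i j k * s i k l = s i j l * s j k l)
    (h01 : ∀ i j k, s i j k = 0 ∨ s i j k = 1)
    (i j k : Fin n) (hij : i ≠ j) (hjk : j ≠ k) (hki : k ≠ i) :
    (s i j i = 1 ∧ s j k j = 1 ∧ s k i k = 1) ∨
    (s i j i = 1 ∧ s j k j = 0 ∧ s k i k = 0) ∨
    (s i j i = 0 ∧ s j k j = 1 ∧ s k i k = 0) ∨
    (s i j i = 0 ∧ s j k j = 0 ∧ s k i k = 1) ∨
    (s i j i = 0 ∧ s j k j = 0 ∧ s k i k = 0) :=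
  zero_one_multiplier_triple_general n s h1 h2 hmul h01 i j k
end

section
/- Let T = (t_ij) be an n×n principal multiplier matrix in canonical form (block-diagonal with blocks of 1's on the diagonal corresponding to a partition of {1,…,n} into intervals, and 0's elsewhere). Define s_ijk = 1 if t_ij = 1 or t_jk = 1, and s_ijk = 0 otherwise. Then {s_ijk} is a multiplier system (satisfies s_iik = 1 = s_ikk and s_ijk·s_ikℓ = s_ijℓ·s_jkℓ), and the principal multiplier matrix of the resulting formal matrix ring, namely (s_iji), equals T. -/
/-! With `T i j = [b i = b j]`, every `s i j k` is `0` or `1`, hence central, and each multiplier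
identity reduces to a propositional identity between statements `b x = b y`, which holds because
equality of labels is an equivalence relation. -/

section BlockMultiplier

variable {ι κ : Type*} [DecidableEq κ] (R : Type*) [Ring R] (b : ι → κ)

def blockMultiplier (i j k : ι) : R := if b i = b j ∨ b j = b k then 1 else 0

variable {R b}

theorem blockMultiplier_commute (i j k : ι) (r : R) : Commute (blockMultiplier R b i j k) r := by
  unfold blockMultiplier
  split_ifs
  exacts [Commute.one_left r, Commute.zero_left r]

theorem blockMultiplier_self_left (i k : ι) : blockMultiplier R b i i k = 1 :=
  if_pos (Or.inl rfl)

theorem blockMultiplier_self_right (i k : ι) : blockMultiplier R b i k k = 1 :=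
  if_pos (Or.inr rfl)

theorem blockMultiplier_mul_blockMultiplier (i j k l : ι) :
    blockMultiplier R b i j k * blockMultiplier R b i k l =
      blockMultiplier R b i j l * blockMultiplier R b j k l := by
  simp only [blockMultiplier, ite_zero_mul_ite_zero, mul_one]
  exact if_congr (by grind) rfl rfl

theorem blockMultiplier_self_mid (i j : ι) :
    blockMultiplier R b i j i = if b i = b j then 1 else 0 := by
  simp only [blockMultiplier, eq_comm (a := b j), or_self]

end BlockMultiplier

theorem canonical_form_gives_multiplier_system_general {R : Type*} [Ring R] [DecidableEq R]
    (n : ℕ) (T : Matrix (Fin n) (Fin n) R) (b : Fin n → ℕ)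
    (hT : ∀ i j, T i j = if b i = b j then (1 : R) else 0)
    (s : Fin n → Fin n → Fin n → R)
    (hs : ∀ i j k, s i j k = if T i j = 1 ∨ T j k = 1 then (1 : R) else 0) :
    (∀ i j k (r : R), s i j k * r = r * s i j k) ∧
    (∀ i k, s i i k = 1) ∧ (∀ i k, s i k k = 1) ∧
    (∀ i j k l, s i j k * s i k l = s i j l * s j k l) ∧
    (∀ i j, s i j i = T i j) := by
  -- `T i j = 1` recovers `b i = b j` only when `1 ≠ 0`, so the zero ring is split off.
  have hs_eq : ∀ i j k, s i j k = blockMultiplier R b i j k := by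
    rcases subsingleton_or_nontrivial R with _ | _
    · exact fun _ _ _ => Subsingleton.elim _ _
    · intro i j k
      simp only [hs, hT, blockMultiplier, ite_eq_left_iff, zero_ne_one, imp_false,
        Decidable.not_not]
  simp only [hs_eq]
  exact ⟨fun i j k r => blockMultiplier_commute i j k r, blockMultiplier_self_left,
    blockMultiplier_self_right, blockMultiplier_mul_blockMultiplier,
    fun i j => by rw [hT, blockMultiplier_self_mid]⟩

/-- If `T` is a principal multiplier matrix in canonical form
(blocks given by a monotone labelling `b`) and `s i j k = 1` when `T i j = 1` or
`T j k = 1` (and `0` otherwise), then `s` is a multiplier system whose principal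
multiplier matrix `(s i j i)` equals `T`. -/
theorem canonical_form_gives_multiplier_system {R : Type*} [Ring R] [DecidableEq R]
    (n : ℕ) (T : Matrix (Fin n) (Fin n) R) (b : Fin n → ℕ) (hb : Monotone b)
    (hT : ∀ i j, T i j = if b i = b j then (1 : R) else 0)
    (s : Fin n → Fin n → Fin n → R)
    (hs : ∀ i j k, s i j k = if T i j = 1 ∨ T j k = 1 then (1 : R) else 0) :
    (∀ i j k (r : R), s i j k * r = r * s i j k) ∧
    (∀ i k, s i i k = 1) ∧ (∀ i k, s i k k = 1) ∧
    (∀ i j k l, s i j k * s i k l = s i j l * s j k l) ∧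
    (∀ i j, s i j i = T i j) :=
  canonical_form_gives_multiplier_system_general n T b hT s hs
end

section
/- For every n×n principal multiplier matrix T over a ring R, there exists a multiplier system Σ = {s_ijk} with all s_ijk ∈ {0,1} such that s_iji = t_ij for all i,j; that is, every abstract principal multiplier matrix is realized as the principal multiplier matrix of some (01)-formal matrix ring over R. -/
/-!
The relation `T i j = 1` is an equivalence relation: reflexivity and symmetry are assumed, and
the triangle condition forbids exactly two of `t_ij, t_jk, t_ki` being `1`. Order the classes
linearly via a class function `σ`, and put `s_ijk = 1` iff `σ j` lies between `σ i` and `σ k`.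
Then `s_iji = 1` iff `σ i = σ j`, and the cocycle identity `s_ijk s_ikℓ = s_ijℓ s_jkℓ` holds
because both sides say that `σ i, σ j, σ k, σ ℓ` is a monotone sequence.
-/

open Set
open scoped Interval

theorem mem_uIcc_and_mem_uIcc_iff {α : Type*} [LinearOrder α] (a b c d : α) :
    b ∈ [[a, c]] ∧ c ∈ [[a, d]] ↔ b ∈ [[a, d]] ∧ c ∈ [[b, d]] := by
  simp only [mem_uIcc]
  grind

section betweenMultiplier

variable (R : Type*) [MulZeroOneClass R] {ι α : Type*} [LinearOrder α] (σ : ι → α)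

open Classical in
noncomputable def betweenMultiplier (i j k : ι) : R :=
  if σ j ∈ [[σ i, σ k]] then 1 else 0

theorem betweenMultiplier_eq_zero_or_eq_one (i j k : ι) :
    betweenMultiplier R σ i j k = 0 ∨ betweenMultiplier R σ i j k = 1 := by
  unfold betweenMultiplier
  split_ifs <;> simp

theorem betweenMultiplier_mul_comm (i j k : ι) (r : R) :
    betweenMultiplier R σ i j k * r = r * betweenMultiplier R σ i j k := by
  unfold betweenMultiplier
  split_ifs <;> simp

theorem betweenMultiplier_self_left (i k : ι) : betweenMultiplier R σ i i k = 1 :=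
  if_pos left_mem_uIcc

theorem betweenMultiplier_self_right (i k : ι) : betweenMultiplier R σ i k k = 1 :=
  if_pos right_mem_uIcc

theorem betweenMultiplier_cocycle (i j k l : ι) :
    betweenMultiplier R σ i j k * betweenMultiplier R σ i k l =
      betweenMultiplier R σ i j l * betweenMultiplier R σ j k l := by
  classical
  unfold betweenMultiplier
  simp only [ite_zero_mul_ite_zero, mul_one]
  exact if_congr (mem_uIcc_and_mem_uIcc_iff _ _ _ _) rfl rfl

open Classical in
theorem betweenMultiplier_principal (i j : ι) :
    betweenMultiplier R σ i j i = if σ j = σ i then 1 else 0 := by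
  simp only [betweenMultiplier, uIcc_self, mem_singleton_iff]

end betweenMultiplier

theorem equivalence_eq_one_of_triangle {ι M : Type*} [Zero M] [One M] [NeZero (1 : M)]
    (T : ι → ι → M) (hsymm : ∀ i j, T i j = T j i) (hdiag : ∀ i, T i i = 1)
    (htriple : ∀ i j k : ι, i ≠ j → j ≠ k → k ≠ i →
      (T i j = 1 ∧ T j k = 1 ∧ T k i = 1) ∨
      (T i j = 0 ∧ T j k = 0) ∨ (T j k = 0 ∧ T k i = 0) ∨ (T i j = 0 ∧ T k i = 0)) :
    Equivalence (fun i j => T i j = 1) := by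
  refine ⟨hdiag, fun h => (hsymm _ _).trans h, fun {i j k} hij hjk => ?_⟩
  obtain rfl | hij' := eq_or_ne i j
  · exact hjk
  obtain rfl | hjk' := eq_or_ne j k
  · exact hij
  obtain rfl | hki := eq_or_ne k i
  · exact hdiag k
  rcases htriple i j k hij' hjk' hki with ⟨-, -, h⟩ | ⟨h, -⟩ | ⟨h, -⟩ | ⟨h, -⟩
  · exact (hsymm i k).trans h
  all_goals simp_all

/-- Theorem 3.1, realization: Every abstract principal multiplier
matrix `T` is the principal multiplier matrix of some (01)-formal matrix ring
over `R`: there is a (01)-multiplier system `s` with `s i j i = T i j`. -/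
theorem realization_of_principal_multiplier_matrix {R : Type*} [Ring R] [Nontrivial R]
    (n : ℕ) (T : Matrix (Fin n) (Fin n) R)
    (h01 : ∀ i j, T i j = 0 ∨ T i j = 1)
    (hsymm : ∀ i j, T i j = T j i)
    (hdiag : ∀ i, T i i = 1)
    (htriple : ∀ i j k : Fin n, i ≠ j → j ≠ k → k ≠ i →
      (T i j = 1 ∧ T j k = 1 ∧ T k i = 1) ∨
      (T i j = 0 ∧ T j k = 0) ∨ (T j k = 0 ∧ T k i = 0) ∨ (T i j = 0 ∧ T k i = 0)) :
    ∃ s : Fin n → Fin n → Fin n → R,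
      (∀ i j k, s i j k = 0 ∨ s i j k = 1) ∧
      (∀ i j k (r : R), s i j k * r = r * s i j k) ∧
      (∀ i k, s i i k = 1) ∧ (∀ i k, s i k k = 1) ∧
      (∀ i j k l, s i j k * s i k l = s i j l * s j k l) ∧
      (∀ i j, s i j i = T i j) := by
  let S : Setoid (Fin n) := ⟨_, equivalence_eq_one_of_triangle T hsymm hdiag htriple⟩
  let σ : Fin n → Fin n := fun i => (Quotient.mk S i).out
  have hσ (i j : Fin n) : σ j = σ i ↔ T j i = 1 := Quotient.out_inj.trans Quotient.eq
  refine ⟨betweenMultiplier R σ, betweenMultiplier_eq_zero_or_eq_one R σ,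
    betweenMultiplier_mul_comm R σ, betweenMultiplier_self_left R σ,
    betweenMultiplier_self_right R σ, betweenMultiplier_cocycle R σ, fun i j => ?_⟩
  rw [betweenMultiplier_principal]
  rcases h01 i j with h | h <;> simp [hσ, hsymm j i, h]
end

section
/- Let K₁ = M(n,R,Σ) and K₂ = M(n,R,Σ') be two (01)-formal matrix rings of the form K₀ over the same ring R (i.e., their multipliers satisfy: s_ijk = 0 whenever i,j,k are pairwise distinct and s_iji = 0 = s_jkj). If their principal multiplier matrices coincide, i.e., s_iji = s'_iji for all i,j, then Σ = Σ' (all multipliers coincide), and hence K₁ = K₂ as rings. -/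
/-!
For a (01)-multiplier system, `s i j i = 1` or `s j k j = 1` forces `s i j k = 1`: the
multiplicativity relation with `ℓ = k` (resp. `ℓ = j`) makes `s i j k` a factor of `1`, and
`0` is not. The `K₀` condition says that for pairwise distinct indices this is the only way
`s i j k` can be `1`, so the whole system is read off its principal matrix `(s i j i)`.
-/

theorem eq_of_zero_or_one_of_eq_one_iff {M : Type*} [Zero M] [One M] {x y : M}
    (hx : x = 0 ∨ x = 1) (hy : y = 0 ∨ y = 1) (h : x = 1 ↔ y = 1) : x = y := by
  rcases hx with rfl | rfl <;> rcases hy with rfl | rfl <;> simp_all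

section MultiplierSystem

variable {ι R : Type*} [MulZeroOneClass R] [Nontrivial R] {s : ι → ι → ι → R}

theorem eq_one_of_zero_or_one_of_mul_eq_one {x y : R} (hx : x = 0 ∨ x = 1) (h : x * y = 1) :
    x = 1 :=
  hx.resolve_left fun h0 => zero_ne_one (by rwa [h0, zero_mul] at h)

theorem multiplier_eq_one_of_principal_left_eq_one (h1 : ∀ i k, s i i k = 1)
    (hmul : ∀ i j k l, s i j k * s i k l = s i j l * s j k l)
    (h01 : ∀ i j k, s i j k = 0 ∨ s i j k = 1) {i j : ι} (k : ι) (hij : s i j i = 1) :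
    s i j k = 1 := by
  have h := hmul i j i k
  rw [hij, h1, one_mul] at h
  exact eq_one_of_zero_or_one_of_mul_eq_one (h01 i j k) h.symm

theorem multiplier_eq_one_of_principal_right_eq_one (h2 : ∀ i k, s i k k = 1)
    (hmul : ∀ i j k l, s i j k * s i k l = s i j l * s j k l)
    (h01 : ∀ i j k, s i j k = 0 ∨ s i j k = 1) (i : ι) {j k : ι} (hjk : s j k j = 1) :
    s i j k = 1 := by
  have h := hmul i j k j
  rw [h2, one_mul, hjk] at h
  exact eq_one_of_zero_or_one_of_mul_eq_one (h01 i j k) h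

theorem multiplier_eq_one_iff_principal_eq_one (h1 : ∀ i k, s i i k = 1)
    (h2 : ∀ i k, s i k k = 1) (hmul : ∀ i j k l, s i j k * s i k l = s i j l * s j k l)
    (h01 : ∀ i j k, s i j k = 0 ∨ s i j k = 1)
    (hK0 : ∀ i j k, i ≠ j → j ≠ k → i ≠ k → s i j i = 0 → s j k j = 0 → s i j k = 0)
    {i j k : ι} (hij : i ≠ j) (hjk : j ≠ k) (hik : i ≠ k) :
    s i j k = 1 ↔ s i j i = 1 ∨ s j k j = 1 := by
  refine ⟨fun h => ?_, fun h => h.elim (multiplier_eq_one_of_principal_left_eq_one h1 hmul h01 k)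
    (multiplier_eq_one_of_principal_right_eq_one h2 hmul h01 i)⟩
  by_contra! hne
  have hzero := hK0 i j k hij hjk hik ((h01 i j i).resolve_right hne.1)
    ((h01 j k j).resolve_right hne.2)
  exact zero_ne_one (hzero.symm.trans h)

end MultiplierSystem

theorem K0_determined_by_principal_matrix_general {R : Type*} [Ring R] [Nontrivial R] (n : ℕ)
    (s s' : Fin n → Fin n → Fin n → R)
    (h1 : ∀ i k, s i i k = 1) (h2 : ∀ i k, s i k k = 1)
    (hmul : ∀ i j k l, s i j k * s i k l = s i j l * s j k l)
    (h01 : ∀ i j k, s i j k = 0 ∨ s i j k = 1)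
    (hK0 : ∀ i j k : Fin n, i ≠ j → j ≠ k → i ≠ k →
      s i j i = 0 → s j k j = 0 → s i j k = 0)
    (h1' : ∀ i k, s' i i k = 1) (h2' : ∀ i k, s' i k k = 1)
    (hmul' : ∀ i j k l, s' i j k * s' i k l = s' i j l * s' j k l)
    (h01' : ∀ i j k, s' i j k = 0 ∨ s' i j k = 1)
    (hK0' : ∀ i j k : Fin n, i ≠ j → j ≠ k → i ≠ k →
      s' i j i = 0 → s' j k j = 0 → s' i j k = 0)
    (hprin : ∀ i j, s i j i = s' i j i) :
    s = s' := by
  funext i j k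
  by_cases hij : i = j
  · subst hij; rw [h1, h1']
  by_cases hjk : j = k
  · subst hjk; rw [h2, h2']
  by_cases hik : i = k
  · subst hik; exact hprin i j
  refine eq_of_zero_or_one_of_eq_one_iff (h01 i j k) (h01' i j k) ?_
  rw [multiplier_eq_one_iff_principal_eq_one h1 h2 hmul h01 hK0 hij hjk hik,
    multiplier_eq_one_iff_principal_eq_one h1' h2' hmul' h01' hK0' hij hjk hik, hprin, hprin]

/-- Two (01)-multiplier systems of the form `K₀` over the same ring
with the same principal multiplier matrix coincide entirely (hence define the
same formal matrix ring). -/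
theorem K0_determined_by_principal_matrix {R : Type*} [Ring R] [Nontrivial R] (n : ℕ)
    (s s' : Fin n → Fin n → Fin n → R)
    (hcent : ∀ i j k (r : R), s i j k * r = r * s i j k)
    (h1 : ∀ i k, s i i k = 1) (h2 : ∀ i k, s i k k = 1)
    (hmul : ∀ i j k l, s i j k * s i k l = s i j l * s j k l)
    (h01 : ∀ i j k, s i j k = 0 ∨ s i j k = 1)
    (hK0 : ∀ i j k : Fin n, i ≠ j → j ≠ k → i ≠ k →
      s i j i = 0 → s j k j = 0 → s i j k = 0)
    (hcent' : ∀ i j k (r : R), s' i j k * r = r * s' i j k)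
    (h1' : ∀ i k, s' i i k = 1) (h2' : ∀ i k, s' i k k = 1)
    (hmul' : ∀ i j k l, s' i j k * s' i k l = s' i j l * s' j k l)
    (h01' : ∀ i j k, s' i j k = 0 ∨ s' i j k = 1)
    (hK0' : ∀ i j k : Fin n, i ≠ j → j ≠ k → i ≠ k →
      s' i j i = 0 → s' j k j = 0 → s' i j k = 0)
    (hprin : ∀ i j, s i j i = s' i j i) :
    s = s' :=
  K0_determined_by_principal_matrix_general n s s' h1 h2 hmul h01 hK0 h1' h2' hmul' h01' hK0' hprin
end

section
/- In a (01)-formal matrix ring of the form K₀, for pairwise distinct indices i,j,k one has s_ijk = 1 if and only if s_iji = 1 or s_jkj = 1. Consequently, the principal multiplier matrix (s_iji) determines all multipliers s_ijk. -/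
/-!
Putting `ℓ = i` and `ℓ = j` in the cocycle identity `s i j k * s i k ℓ = s i j ℓ * s j k ℓ` gives
`s i j i = s i j k * s j i k` and `s j k j = s i j k * s i k j`. So `s i j k` is a left factor of
both principal multipliers, and being `0` or `1` it must be `1` as soon as one of them is `1`.
Conversely, if both principal multipliers vanish, the `K₀` condition forces `s i j k = 0`.
-/

theorem eq_one_of_mul_eq_one_of_eq_zero_or_eq_one {M : Type*} [MulZeroOneClass M] [NeZero (1 : M)]
    {x y : M} (hx : x = 0 ∨ x = 1) (h : x * y = 1) : x = 1 :=
  hx.resolve_left fun h0 => zero_ne_one (by rwa [h0, zero_mul] at h)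

section MultiplierSystem

variable {ι M : Type*} [MulOneClass M] {s : ι → ι → ι → M}

theorem principal_multiplier_eq_mul (h1 : ∀ i k, s i i k = 1)
    (hmul : ∀ i j k l, s i j k * s i k l = s i j l * s j k l) (i j k : ι) :
    s i j i = s i j k * s j i k := by
  simpa only [h1, mul_one] using hmul i j i k

theorem mul_eq_principal_multiplier (h2 : ∀ i k, s i k k = 1)
    (hmul : ∀ i j k l, s i j k * s i k l = s i j l * s j k l) (i j k : ι) :
    s i j k * s i k j = s j k j := by
  simpa only [h2, one_mul] using hmul i j k j

end MultiplierSystem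

theorem K0_multiplier_formula_general {R : Type*} [Ring R] [Nontrivial R] (n : ℕ)
    (s : Fin n → Fin n → Fin n → R)
    (h1 : ∀ i k, s i i k = 1) (h2 : ∀ i k, s i k k = 1)
    (hmul : ∀ i j k l, s i j k * s i k l = s i j l * s j k l)
    (h01 : ∀ i j k, s i j k = 0 ∨ s i j k = 1)
    (hK0 : ∀ i j k : Fin n, i ≠ j → j ≠ k → i ≠ k →
      s i j i = 0 → s j k j = 0 → s i j k = 0)
    (i j k : Fin n) (hij : i ≠ j) (hjk : j ≠ k) (hik : i ≠ k) :
    s i j k = 1 ↔ (s i j i = 1 ∨ s j k j = 1) := by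
  constructor
  · intro h
    by_contra! hc
    have hzero := hK0 i j k hij hjk hik ((h01 i j i).resolve_right hc.1)
      ((h01 j k j).resolve_right hc.2)
    exact one_ne_zero (h ▸ hzero)
  · rintro (h | h)
    · exact eq_one_of_mul_eq_one_of_eq_zero_or_eq_one (h01 i j k)
        ((principal_multiplier_eq_mul h1 hmul i j k).symm.trans h)
    · exact eq_one_of_mul_eq_one_of_eq_zero_or_eq_one (h01 i j k)
        ((mul_eq_principal_multiplier h2 hmul i j k).trans h)

/-- In a (01)-multiplier system of the form `K₀`, for pairwise
distinct `i, j, k` one has `s i j k = 1` iff `s i j i = 1` or `s j k j = 1`;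
hence the principal multiplier matrix determines all multipliers. -/
theorem K0_multiplier_formula {R : Type*} [Ring R] [Nontrivial R] (n : ℕ)
    (s : Fin n → Fin n → Fin n → R)
    (hcent : ∀ i j k (r : R), s i j k * r = r * s i j k)
    (h1 : ∀ i k, s i i k = 1) (h2 : ∀ i k, s i k k = 1)
    (hmul : ∀ i j k l, s i j k * s i k l = s i j l * s j k l)
    (h01 : ∀ i j k, s i j k = 0 ∨ s i j k = 1)
    (hK0 : ∀ i j k : Fin n, i ≠ j → j ≠ k → i ≠ k →
      s i j i = 0 → s j k j = 0 → s i j k = 0)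
    (i j k : Fin n) (hij : i ≠ j) (hjk : j ≠ k) (hik : i ≠ k) :
    s i j k = 1 ↔ (s i j i = 1 ∨ s j k j = 1) :=
  K0_multiplier_formula_general n s h1 h2 hmul h01 hK0 i j k hij hjk hik
end

section
/- Let s be a central element of a ring R with s² ≠ 1 and s² ≠ s, and let S = (s_iji) be the principal multiplier matrix of an (s1)-formal matrix ring M(n,R,s). Then the relation i ~ j defined by s_iji = 1 is an equivalence relation on {1,…,n}; hence there exists a permutation τ of {1,…,n} such that τS is in canonical form: block-diagonal with blocks of 1's on the main diagonal and the element s in all remaining positions. -/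
/-!
The multiplier identity with `(i, j, k, l) = (i, j, i, j)` gives symmetry of `t i j i`. For
transitivity, suppose `t i j i = t j k j = 1` but `t i k i = s`. Since every entry lies in
`{1, s}` and `s ^ 2 ∉ {1, s}`, the identities for `(i, k, j, i)` and `(i, k, j, k)` first force
`t i k j = s` and then `s * t i j k = 1`, which is impossible. Labelling the equivalence classes by
natural numbers and sorting the indices by label then yields the canonical form.
-/

theorem Equivalence.exists_nat_label {ι : Type*} [Countable ι] {r : ι → ι → Prop}
    (hr : Equivalence r) : ∃ c : ι → ℕ, ∀ i j, r i j ↔ c i = c j := by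
  let S : Setoid ι := ⟨r, hr⟩
  obtain ⟨f, hf⟩ := Countable.exists_injective_nat (Quotient S)
  exact ⟨fun i => f ⟦i⟧, fun i j => Quotient.eq.symm.trans hf.eq_iff.symm⟩

theorem Equivalence.exists_perm_monotone_label {n : ℕ} {r : Fin n → Fin n → Prop}
    (hr : Equivalence r) :
    ∃ (τ : Equiv.Perm (Fin n)) (b : Fin n → ℕ), Monotone b ∧ ∀ i j, r (τ i) (τ j) ↔ b i = b j := by
  obtain ⟨c, hc⟩ := hr.exists_nat_label
  exact ⟨Tuple.sort c, c ∘ Tuple.sort c, Tuple.monotone_sort c, fun i j => hc _ _⟩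

namespace MultiplierSystem

variable {ι M : Type*} [Monoid M] {t : ι → ι → ι → M}

theorem principal_symm (h1 : ∀ i k, t i i k = 1) (h2 : ∀ i k, t i k k = 1)
    (hmul : ∀ i j k l, t i j k * t i k l = t i j l * t j k l) (i j : ι) :
    t i j i = t j i j := by
  simpa only [h1, h2, mul_one, one_mul] using hmul i j i j

theorem principal_trans {s : M} (hs1 : s ^ 2 ≠ 1) (hss : s ^ 2 ≠ s)
    (h1 : ∀ i k, t i i k = 1) (h2 : ∀ i k, t i k k = 1)
    (hmul : ∀ i j k l, t i j k * t i k l = t i j l * t j k l)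
    (h1s : ∀ i j k, t i j k = 1 ∨ t i j k = s) {i j k : ι}
    (hij : t i j i = 1) (hjk : t j k j = 1) : t i k i = 1 := by
  refine (h1s i k i).resolve_right fun hik => ?_
  have hikj : t i k j = s * t k j i := by
    simpa only [hij, hik, mul_one] using hmul i k j i
  have hikj_eq : t i k j = s := by
    rcases h1s k j i with h | h
    · rwa [h, mul_one] at hikj
    · rw [h, ← sq] at hikj
      rcases h1s i k j with h' | h' <;> rw [h'] at hikj
      exacts [(hs1 hikj.symm).elim, (hss hikj.symm).elim]
  have hs_mul : s * t i j k = 1 := by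
    simpa only [hikj_eq, h2, one_mul, principal_symm h1 h2 hmul k j, hjk] using hmul i k j k
  rcases h1s i j k with h | h <;> rw [h] at hs_mul
  · exact hss (by rw [sq, (mul_one s).symm.trans hs_mul, one_mul])
  · exact hs1 (by rwa [sq])

theorem principal_equivalence {s : M} (hs1 : s ^ 2 ≠ 1) (hss : s ^ 2 ≠ s)
    (h1 : ∀ i k, t i i k = 1) (h2 : ∀ i k, t i k k = 1)
    (hmul : ∀ i j k l, t i j k * t i k l = t i j l * t j k l)
    (h1s : ∀ i j k, t i j k = 1 ∨ t i j k = s) :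
    Equivalence (fun i j => t i j i = 1) where
  refl i := h1 i i
  symm {i j} h := (principal_symm h1 h2 hmul j i).trans h
  trans := principal_trans hs1 hss h1 h2 hmul h1s

end MultiplierSystem

open MultiplierSystem in
theorem s1_principal_matrix_canonical_form_general {R : Type*} [Ring R] (n : ℕ) (s : R)
    (hs1 : s ^ 2 ≠ 1) (hss : s ^ 2 ≠ s)
    (t : Fin n → Fin n → Fin n → R)
    (h1 : ∀ i k, t i i k = 1) (h2 : ∀ i k, t i k k = 1)
    (hmul : ∀ i j k l, t i j k * t i k l = t i j l * t j k l)
    (h1s : ∀ i j k, t i j k = 1 ∨ t i j k = s) :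
    Equivalence (fun i j : Fin n => t i j i = 1) ∧
    ∃ (τ : Equiv.Perm (Fin n)) (b : Fin n → ℕ), Monotone b ∧
      ∀ i j, t (τ i) (τ j) (τ i) = if b i = b j then (1 : R) else s := by
  have hequiv := principal_equivalence hs1 hss h1 h2 hmul h1s
  obtain ⟨τ, b, hb, hτb⟩ := hequiv.exists_perm_monotone_label
  refine ⟨hequiv, τ, b, hb, fun i j => ?_⟩
  split_ifs with h
  · exact (hτb i j).mpr h
  · exact (h1s _ _ _).resolve_left fun h' => h ((hτb i j).mp h')

/-- cf. [KryT17, Lemma 18.2]: For the principal multiplier matrix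
`(t i j i)` of an (s1)-formal matrix ring, the relation `i ~ j ↔ t i j i = 1` is
an equivalence relation; hence some permutation `τ` brings it to canonical form:
block-diagonal with blocks of `1`s on the diagonal and `s` elsewhere. -/
theorem s1_principal_matrix_canonical_form {R : Type*} [Ring R] (n : ℕ) (s : R)
    (hscent : ∀ r : R, s * r = r * s) (hs1 : s ^ 2 ≠ 1) (hss : s ^ 2 ≠ s)
    (t : Fin n → Fin n → Fin n → R)
    (hcent : ∀ i j k (r : R), t i j k * r = r * t i j k)
    (h1 : ∀ i k, t i i k = 1) (h2 : ∀ i k, t i k k = 1)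
    (hmul : ∀ i j k l, t i j k * t i k l = t i j l * t j k l)
    (h1s : ∀ i j k, t i j k = 1 ∨ t i j k = s) :
    Equivalence (fun i j : Fin n => t i j i = 1) ∧
    ∃ (τ : Equiv.Perm (Fin n)) (b : Fin n → ℕ), Monotone b ∧
      ∀ i j, t (τ i) (τ j) (τ i) = if b i = b j then (1 : R) else s :=
  s1_principal_matrix_canonical_form_general n s hs1 hss t h1 h2 hmul h1s
end

section
/- Let R be a commutative ring. If the matrix rings M(n,R) and M(m,R) are isomorphic as rings, then n = m. (That is, commutative rings satisfy the (n,m)-condition.) -/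
/-!
A ring isomorphism `e : M(n,R) ≃+* M(m,R)` maps centre onto centre, and the centre of a matrix
ring over a commutative ring is the copy of `R` given by the scalar matrices. So `e` restricts to
an automorphism `σ` of `R` along which it is `σ`-semilinear; semilinear bijections preserve rank,
and commutative nontrivial rings have invariant basis number, so `n * n = m * m`.
-/

namespace Matrix

variable {R : Type*} [CommRing R] {ι κ : Type*} [Fintype ι] [Fintype κ]

theorem isEmpty_of_ringEquiv [Nontrivial R] [IsEmpty ι] (e : Matrix ι ι R ≃+* Matrix κ κ R) :
    IsEmpty κ := by
  by_contra hκ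
  have : Nonempty κ := not_isEmpty_iff.mp hκ
  exact not_subsingleton (Matrix κ κ R) e.symm.injective.subsingleton

variable [DecidableEq ι] [DecidableEq κ]

theorem mem_subringCenter_iff {A : Matrix ι ι R} :
    A ∈ Subring.center (Matrix ι ι R) ↔ A ∈ Set.range (scalar ι) := by
  rw [← SetLike.mem_coe, Subring.coe_center, center_eq_range]

noncomputable def scalarEquivCenter (ι R : Type*) [CommRing R] [Fintype ι] [DecidableEq ι]
    [Nonempty ι] : R ≃+* Subring.center (Matrix ι ι R) :=
  RingEquiv.ofBijective
    ((scalar ι).codRestrict _ fun r => mem_subringCenter_iff.mpr (Set.mem_range_self r))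
    ⟨fun _ _ h => scalar_inj.mp (congrArg Subtype.val h), fun ⟨_, hA⟩ =>
      let ⟨r, hr⟩ := mem_subringCenter_iff.mp hA
      ⟨r, Subtype.ext hr⟩⟩

@[simp]
theorem coe_scalarEquivCenter [Nonempty ι] (r : R) :
    (scalarEquivCenter ι R r : Matrix ι ι R) = scalar ι r := rfl

noncomputable def centerRingEquiv [Nonempty ι] [Nonempty κ]
    (e : Matrix ι ι R ≃+* Matrix κ κ R) : R ≃+* R :=
  (scalarEquivCenter ι R).trans ((Subring.centerCongr e).trans (scalarEquivCenter κ R).symm)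

theorem scalar_centerRingEquiv [Nonempty ι] [Nonempty κ] (e : Matrix ι ι R ≃+* Matrix κ κ R)
    (r : R) : scalar κ (centerRingEquiv e r) = e (scalar ι r) := by
  rw [← coe_scalarEquivCenter, centerRingEquiv]
  simp only [RingEquiv.trans_apply, RingEquiv.apply_symm_apply]
  rfl

theorem card_eq_of_ringEquiv [Nontrivial R] (e : Matrix ι ι R ≃+* Matrix κ κ R) :
    Fintype.card ι = Fintype.card κ := by
  rcases isEmpty_or_nonempty ι with hι | hι
  · have := isEmpty_of_ringEquiv e
    simp
  rcases isEmpty_or_nonempty κ with hκ | hκ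
  · have := isEmpty_of_ringEquiv e.symm
    simp
  have hrank : Module.finrank R (Matrix ι ι R) = Module.finrank R (Matrix κ κ R) :=
    Algebra.finrank_eq_of_equiv_equiv (centerRingEquiv e) e <|
      RingHom.ext (scalar_centerRingEquiv e)
  simpa [Module.finrank_matrix, Nat.mul_self_inj] using hrank

end Matrix

/-- Commutative rings satisfy the (n,m)-condition: if the matrix
rings `M(n,R)` and `M(m,R)` are isomorphic, then `n = m`. -/
theorem commutative_nm_condition {R : Type*} [CommRing R] [Nontrivial R] (n m : ℕ)
    (e : Matrix (Fin n) (Fin n) R ≃+* Matrix (Fin m) (Fin m) R) :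
    n = m := by
  simpa using Matrix.card_eq_of_ringEquiv e
end

section
/- Let Σ = {s_ijk} be a (01)-multiplier system over R whose principal multiplier matrix is in canonical form with blocks B₁,…,B_k (so s_iji = 1 iff i,j lie in the same block), and suppose Σ is of the form K₀. Then the map sending a matrix A ∈ M(n,R,Σ) to the tuple of its diagonal-block submatrices (A|_{B₁×B₁}, …, A|_{B_k×B_k}) is a surjective ring homomorphism M(n,R,Σ) → M(n₁,R) × … × M(n_k,R) whose kernel consists of the matrices vanishing on all diagonal blocks, and this kernel is a nilpotent ideal. -/
/-- Iterated product of `m + 1` elements with respect to a binary operation. -/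
def iterProd {α : Type*} (f : α → α → α) : (m : ℕ) → (Fin (m + 1) → α) → α
  | 0, A => A 0
  | m + 1, A => f (A 0) (iterProd f m fun l => A l.succ)

/-!
Canonical form and `K₀` pin the multipliers down on two patterns. If `j` and `l` share a block,
the cocycle identity gives `s i j l * s i l j = s i j j * s j l j = 1`, so the `0/1`-valued
`s i j l` is `1`; hence inside a diagonal block the product is the ordinary matrix product. If `j`
lies in a block different from those of `i` and `l`, then `s i j i = s j l j = 0` and `K₀` (or,
for `i = l`, the first of these) gives `s i j l = 0`; hence every term of a product of two matrices
vanishing on the diagonal blocks is zero, and the kernel squares to zero.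
-/

namespace Matrix

open Finset

variable {ι κ R : Type*}

/-- The multiplication of the formal matrix ring `M(n, R, Σ)`. -/
def multiplierMul [Fintype ι] [NonUnitalNonAssocSemiring R] (s : ι → ι → ι → R)
    (A B : Matrix ι ι R) : Matrix ι ι R :=
  of fun i j => ∑ l, s i l j * A i l * B l j

lemma multiplierMul_apply [Fintype ι] [NonUnitalNonAssocSemiring R] (s : ι → ι → ι → R)
    (A B : Matrix ι ι R) (i j : ι) :
    multiplierMul s A B i j = ∑ l, s i l j * A i l * B l j :=
  rfl

lemma toSquareBlock_add [Add R] (A B : Matrix ι ι R) (b : ι → κ) (t : κ) :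
    (A + B).toSquareBlock b t = A.toSquareBlock b t + B.toSquareBlock b t :=
  rfl

lemma toSquareBlock_one [DecidableEq ι] [Zero R] [One R] (b : ι → κ) (t : κ) :
    (1 : Matrix ι ι R).toSquareBlock b t = 1 :=
  toBlock_one_self _

lemma exists_toSquareBlock_eq [Zero R] (b : ι → κ)
    (M : ∀ t, Matrix {i // b i = t} {i // b i = t} R) :
    ∃ A : Matrix ι ι R, ∀ t, A.toSquareBlock b t = M t := by
  classical
  refine ⟨of fun i j => if h : b j = b i then M (b i) ⟨i, rfl⟩ ⟨j, h⟩ else 0, fun t => ?_⟩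
  ext ⟨i, rfl⟩ ⟨j, hj⟩
  simp [toSquareBlock_def, hj]

lemma toSquareBlock_eq_zero_iff [Zero R] (A : Matrix ι ι R) (b : ι → κ) :
    (fun t => A.toSquareBlock b t) = 0 ↔ ∀ i j, b i = b j → A i j = 0 := by
  constructor
  · intro h i j hij
    exact congr_fun (congr_fun (congr_fun h (b i)) ⟨i, rfl⟩) ⟨j, hij.symm⟩
  · intro h
    funext t
    ext ⟨i, hi⟩ ⟨j, hj⟩
    exact h i j (hi.trans hj.symm)

variable [Fintype ι] {s : ι → ι → ι → R} {b : ι → κ}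

lemma toSquareBlock_multiplierMul [NonAssocSemiring R] [DecidableEq κ]
    (hsame : ∀ i j l, b i = b j → b j = b l → s i j l = 1)
    (hcross : ∀ i j l, b i ≠ b j → b j ≠ b l → s i j l = 0)
    (A B : Matrix ι ι R) (t : κ) :
    (multiplierMul s A B).toSquareBlock b t = A.toSquareBlock b t * B.toSquareBlock b t := by
  classical
  ext ⟨i, hi⟩ ⟨j, hj⟩
  simp only [toSquareBlock_def, of_apply, multiplierMul_apply, mul_apply]
  rw [← sum_subtype (univ.filter fun l => b l = t) (by simp) fun l => A i l * B l j,
    sum_filter]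
  refine sum_congr rfl fun l _ => ?_
  by_cases hl : b l = t
  · rw [if_pos hl, hsame i l j (hi.trans hl.symm) (hl.trans hj.symm), one_mul]
  · rw [if_neg hl, hcross i l j (fun h => hl (h ▸ hi)) (fun h => hl (h.trans hj)),
      zero_mul, zero_mul]

lemma multiplierMul_eq_zero_of_vanish_on_blocks [NonUnitalNonAssocSemiring R]
    (hcross : ∀ i j l, b i ≠ b j → b j ≠ b l → s i j l = 0) {A B : Matrix ι ι R}
    (hA : ∀ i j, b i = b j → A i j = 0) (hB : ∀ i j, b i = b j → B i j = 0) :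
    multiplierMul s A B = 0 := by
  ext i j
  refine sum_eq_zero fun l _ => ?_
  by_cases hil : b i = b l
  · rw [hA i l hil, mul_zero, zero_mul]
  by_cases hlj : b l = b j
  · rw [hB l j hlj, mul_zero]
  rw [hcross i l j hil hlj, zero_mul, zero_mul]

end Matrix

section MultiplierSystem

variable {ι κ R : Type*} {s : ι → ι → ι → R}

lemma multiplier_eq_one_of_principal_eq_one [MulZeroOneClass R] (h2 : ∀ i k', s i k' k' = 1)
    (hmul : ∀ i j k' l, s i j k' * s i k' l = s i j l * s j k' l)
    (h01 : ∀ i j k', s i j k' = 0 ∨ s i j k' = 1)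
    (i : ι) {j l : ι} (hjl : s j l j = 1) : s i j l = 1 := by
  have hprod : s i j l * s i l j = 1 := by
    rw [hmul, h2, hjl, one_mul]
  rcases h01 i j l with h | h
  · -- then `0 = 1` in `R`
    rw [h, zero_mul] at hprod
    rw [h, hprod]
  · exact h

lemma multiplier_eq_zero_of_cross_blocks [Zero R] [One R] {b : ι → κ}
    (h01 : ∀ i j k', s i j k' = 0 ∨ s i j k' = 1)
    (hK0 : ∀ i j k' : ι, i ≠ j → j ≠ k' → i ≠ k' → s i j i = 0 → s j k' j = 0 → s i j k' = 0)
    (hcanon : ∀ i j, s i j i = 1 ↔ b i = b j)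
    {i j l : ι} (hij : b i ≠ b j) (hjl : b j ≠ b l) : s i j l = 0 := by
  have hzero : ∀ {i j}, b i ≠ b j → s i j i = 0 := fun hne =>
    (h01 _ _ _).resolve_right fun h => hne ((hcanon _ _).mp h)
  by_cases hil : i = l
  · subst hil
    exact hzero hij
  · exact hK0 i j l (fun h => hij (h ▸ rfl)) (fun h => hjl (h ▸ rfl)) hil (hzero hij) (hzero hjl)

end MultiplierSystem

theorem K0_canonical_block_projection_general {R : Type*} [Ring R]
    (n k : ℕ) (b : Fin n → Fin k)
    (s : Fin n → Fin n → Fin n → R)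
    (h2 : ∀ i k', s i k' k' = 1)
    (hmul : ∀ i j k' l, s i j k' * s i k' l = s i j l * s j k' l)
    (h01 : ∀ i j k', s i j k' = 0 ∨ s i j k' = 1)
    (hK0 : ∀ i j k' : Fin n, i ≠ j → j ≠ k' → i ≠ k' →
      s i j i = 0 → s j k' j = 0 → s i j k' = 0)
    (hcanon : ∀ i j, s i j i = 1 ↔ b i = b j)
    (fmul : Matrix (Fin n) (Fin n) R → Matrix (Fin n) (Fin n) R → Matrix (Fin n) (Fin n) R)
    (hfmul : ∀ A B i j, fmul A B i j = ∑ k', s i k' j * A i k' * B k' j)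
    (φ : Matrix (Fin n) (Fin n) R → ∀ t : Fin k, Matrix {i // b i = t} {i // b i = t} R)
    (hφ : ∀ A t p q, φ A t p q = A p.1 q.1) :
    Function.Surjective φ ∧
    (∀ A B, φ (A + B) = φ A + φ B) ∧
    φ 1 = 1 ∧
    (∀ A B t, φ (fmul A B) t = φ A t * φ B t) ∧
    (∀ A, φ A = 0 ↔ ∀ i j, b i = b j → A i j = 0) ∧
    (∃ m : ℕ, ∀ A : Fin (m + 1) → Matrix (Fin n) (Fin n) R,
      (∀ l i j, b i = b j → A l i j = 0) → iterProd fmul m A = 0) := by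
  obtain rfl : fmul = Matrix.multiplierMul s := by
    funext A B
    ext i j
    exact hfmul A B i j
  obtain rfl : φ = fun A t => A.toSquareBlock b t := by
    funext A t
    ext p q
    exact hφ A t p q
  have hsame : ∀ i j l, b i = b j → b j = b l → s i j l = 1 := fun i j l _ hjl =>
    multiplier_eq_one_of_principal_eq_one h2 hmul h01 i ((hcanon j l).mpr hjl)
  have hcross : ∀ i j l, b i ≠ b j → b j ≠ b l → s i j l = 0 := fun _ _ _ =>
    multiplier_eq_zero_of_cross_blocks h01 hK0 hcanon
  open Matrix in
  refine ⟨fun M => (exists_toSquareBlock_eq b M).imp fun _ h => funext h,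
    fun A B => funext fun t => toSquareBlock_add A B b t,
    funext fun t => toSquareBlock_one b t,
    toSquareBlock_multiplierMul hsame hcross,
    fun A => toSquareBlock_eq_zero_iff A b,
    ⟨1, fun A hA => multiplierMul_eq_zero_of_vanish_on_blocks hcross (hA 0) (hA 1)⟩⟩

/-- For a (01)-multiplier system of the form `K₀` whose principal
multiplier matrix is in canonical form with blocks `B₁, …, B_k` (fibers of `b`),
the map sending a matrix to the tuple of its diagonal-block submatrices is a
surjective ring homomorphism onto the product of the full matrix rings over the
blocks; its kernel is the set of matrices vanishing on all diagonal blocks, and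
this kernel is a nilpotent ideal. -/
theorem K0_canonical_block_projection {R : Type*} [Ring R] [Nontrivial R]
    (n k : ℕ) (b : Fin n → Fin k)
    (s : Fin n → Fin n → Fin n → R)
    (hcent : ∀ i j k' (r : R), s i j k' * r = r * s i j k')
    (h1 : ∀ i k', s i i k' = 1) (h2 : ∀ i k', s i k' k' = 1)
    (hmul : ∀ i j k' l, s i j k' * s i k' l = s i j l * s j k' l)
    (h01 : ∀ i j k', s i j k' = 0 ∨ s i j k' = 1)
    (hK0 : ∀ i j k' : Fin n, i ≠ j → j ≠ k' → i ≠ k' →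
      s i j i = 0 → s j k' j = 0 → s i j k' = 0)
    (hcanon : ∀ i j, s i j i = 1 ↔ b i = b j)
    (fmul : Matrix (Fin n) (Fin n) R → Matrix (Fin n) (Fin n) R → Matrix (Fin n) (Fin n) R)
    (hfmul : ∀ A B i j, fmul A B i j = ∑ k', s i k' j * A i k' * B k' j)
    (φ : Matrix (Fin n) (Fin n) R → ∀ t : Fin k, Matrix {i // b i = t} {i // b i = t} R)
    (hφ : ∀ A t p q, φ A t p q = A p.1 q.1) :
    Function.Surjective φ ∧
    (∀ A B, φ (A + B) = φ A + φ B) ∧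
    φ 1 = 1 ∧
    (∀ A B t, φ (fmul A B) t = φ A t * φ B t) ∧
    (∀ A, φ A = 0 ↔ ∀ i j, b i = b j → A i j = 0) ∧
    (∃ m : ℕ, ∀ A : Fin (m + 1) → Matrix (Fin n) (Fin n) R,
      (∀ l i j, b i = b j → A l i j = 0) → iterProd fmul m A = 0) :=
  K0_canonical_block_projection_general n k b s h2 hmul h01 hK0 hcanon fmul hfmul φ hφ
end
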